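/- Let π be a compactly supported probability measure on ℝ^d, let Q be a symmetric positive semidefinite d×d matrix with largest eigenvalue M := λ_max(Q) > 0, and set T := (1/2) log(1 + M⁻¹). Let p_T(x) := ∫ exp(−‖x − e^{−T} y‖² / (2(1 − e^{−2T}))) dπ(y) be the OU-evolved (unnormalized) density of π at time T. Then for every x ∈ ℝ^d, the Hessian satisfies ∇² log p_T(x) ≼ (1 + M)·(M · χ_M(π) − 1) · I, where χ_M(π) := sup_{z ∈ ℝ^d} ‖Cov(T_{M, M z} π)‖ is the susceptibility of π at parameter M. -/

import Mathlib

/-!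
Completing the square in the Gaussian kernel gives `p_T(x) = exp(-(M+1)‖x‖²/2) · Z(c x)` with
`Z(θ) = ∫ exp(-(M/2)‖y‖² + ⟨θ, y⟩) dπ(y)` and `c = e^{-T}(M+1)`; the choice of `T` makes
`c² = M(M+1)`. The Hessian of the log-Laplace transform `log Z` at `θ` is the covariance of the
tilt of `π` with density `∝ exp(-(M/2)‖y‖² + ⟨θ, y⟩)`, which is `T_{M,θ}π`. Hence
`∇² log p_T(x) = -(M+1) I + M(M+1) Cov(T_{M, c x}π) ≼ (M+1)(Mχ - 1) I`.
-/

open MeasureTheory Set Matrix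

noncomputable section

/-- The isotropic quadratic tilt `T_{t, t z} π`, with density proportional to
`exp(-(t/2)‖y‖² + t⟨z,y⟩)` with respect to `π`. -/
def tiltD {d : ℕ} (π : Measure (Fin d → ℝ)) (t : ℝ) (z : Fin d → ℝ) :
    Measure (Fin d → ℝ) :=
  ((π.withDensity fun y => ENNReal.ofReal (Real.exp (-(t/2) * (y ⬝ᵥ y) + t * (z ⬝ᵥ y)))) univ)⁻¹ •
    π.withDensity fun y => ENNReal.ofReal (Real.exp (-(t/2) * (y ⬝ᵥ y) + t * (z ⬝ᵥ y)))

/-- Quadratic form `vᵀ Cov(μ) v` of the covariance matrix of a measure. -/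
def covQ {d : ℕ} (μ : Measure (Fin d → ℝ)) (v : Fin d → ℝ) : ℝ :=
  (∫ y, (v ⬝ᵥ y)^2 ∂μ) - (∫ y, v ⬝ᵥ y ∂μ)^2

/-- The OU-evolved (unnormalized) density of `π` at time `T = ½ log(1 + M⁻¹)`:
`p_T(x) = ∫ exp(-‖x - e^{-T} y‖²/(2(1-e^{-2T}))) dπ(y)`. -/
def pT {d : ℕ} (π : Measure (Fin d → ℝ)) (M : ℝ) (x : Fin d → ℝ) : ℝ :=
  ∫ y, Real.exp (-((x - Real.exp (-((1/2) * Real.log (1 + M⁻¹))) • y) ⬝ᵥ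
      (x - Real.exp (-((1/2) * Real.log (1 + M⁻¹))) • y)) /
      (2 * (1 - Real.exp (-2 * ((1/2) * Real.log (1 + M⁻¹)))))) ∂π

section ParametricIntegral

variable {α : Type*} [TopologicalSpace α] [MeasurableSpace α] [OpensMeasurableSpace α]
  [TopologicalSpace.MetrizableSpace α] {μ : Measure α} [IsFiniteMeasure μ] {K : Set α}

theorem Continuous.integrable_of_measure_compl_eq_zero {G : Type*} [NormedAddCommGroup G]
    {f : α → G} (hf : Continuous f) (hK : IsCompact K) (hKμ : μ Kᶜ = 0) : Integrable f μ := by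
  rw [← Measure.restrict_eq_self_of_ae_mem (ae_iff.2 hKμ)]
  exact hf.continuousOn.integrableOn_compact hK

theorem hasFDerivAt_integral_of_measure_compl_eq_zero [SecondCountableTopology α] {H G : Type*}
    [NormedAddCommGroup H] [NormedSpace ℝ H] [ProperSpace H]
    [NormedAddCommGroup G] [NormedSpace ℝ G] [CompleteSpace G]
    (hK : IsCompact K) (hKμ : μ Kᶜ = 0) {F : H → α → G} {F' : H → α → H →L[ℝ] G}
    (hF : Continuous (Function.uncurry F)) (hF' : Continuous (Function.uncurry F'))
    (hFF' : ∀ x y, HasFDerivAt (F · y) (F' x y) x) (x₀ : H) :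
    HasFDerivAt (fun x => ∫ y, F x y ∂μ) (∫ y, F' x₀ y ∂μ) x₀ := by
  obtain ⟨C, hC⟩ := ((isCompact_closedBall x₀ 1).prod hK).exists_bound_of_continuousOn
    hF'.continuousOn
  have hFx (x : H) : Continuous (F x) := hF.comp (Continuous.prodMk_right x)
  refine hasFDerivAt_integral_of_dominated_of_fderiv_le (bound := fun _ => C)
    (Metric.ball_mem_nhds x₀ one_pos) (.of_forall fun x => (hFx x).aestronglyMeasurable)
    ((hFx x₀).integrable_of_measure_compl_eq_zero hK hKμ)
    (hF'.comp (Continuous.prodMk_right x₀)).aestronglyMeasurable ?_ (integrable_const C)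
    (.of_forall fun y x _ => hFF' x y)
  filter_upwards [ae_iff.2 hKμ] with y hy x hx
  exact hC (x, y) ⟨Metric.ball_subset_closedBall hx, hy⟩

end ParametricIntegral

theorem fderiv_div_apply {E : Type*} [NormedAddCommGroup E] [NormedSpace ℝ E] {f g : E → ℝ}
    {x : E} (hf : DifferentiableAt ℝ f x) (hg : DifferentiableAt ℝ g x) (hx : g x ≠ 0) (v : E) :
    fderiv ℝ (fun y => f y / g y) x v
      = (fderiv ℝ f x v * g x - f x * fderiv ℝ g x v) / g x ^ 2 := by
  have hinv : HasFDerivAt (fun y => (g y)⁻¹) _ x := (hasFDerivAt_inv hx).comp x hg.hasFDerivAt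
  simp only [div_eq_mul_inv]
  rw [(hf.hasFDerivAt.fun_mul hinv).fderiv]
  simp only [_root_.add_apply, _root_.smul_apply, ContinuousLinearMap.comp_apply,
    ContinuousLinearMap.toSpanSingleton_apply, smul_eq_mul, mul_neg]
  field_simp
  ring

section

variable {d : ℕ}

def dotProductCLM : (Fin d → ℝ) →L[ℝ] (Fin d → ℝ) →L[ℝ] ℝ :=
  LinearMap.toContinuousLinearMap
    ((LinearMap.toContinuousLinearMap : ((Fin d → ℝ) →ₗ[ℝ] ℝ) ≃ₗ[ℝ] _).toLinearMap ∘ₗ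
      dotProductBilin ℝ ℝ)

@[simp] lemma dotProductCLM_apply (x y : Fin d → ℝ) : dotProductCLM x y = x ⬝ᵥ y := rfl

lemma hasFDerivAt_dotProduct_self (x : Fin d → ℝ) :
    HasFDerivAt (fun u : Fin d → ℝ => u ⬝ᵥ u) (2 • dotProductCLM x) x := by
  refine (dotProductCLM.hasFDerivAt_of_bilinear (hasFDerivAt_id x)
    (hasFDerivAt_id x)).congr_fderiv ?_
  ext v
  simp [two_mul, dotProduct_comm]

section ExpMoment

variable (π : Measure (Fin d → ℝ)) (V : (Fin d → ℝ) → ℝ)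

def expMoment (g : (Fin d → ℝ) → ℝ) (θ : Fin d → ℝ) : ℝ :=
  ∫ y, g y * Real.exp (V y + θ ⬝ᵥ y) ∂π

variable {π V} [IsFiniteMeasure π] {K : Set (Fin d → ℝ)} (hK : IsCompact K) (hKπ : π Kᶜ = 0)
  (hV : Continuous V)
include hK hKπ hV

theorem hasFDerivAt_expMoment {g : (Fin d → ℝ) → ℝ} (hg : Continuous g) (θ : Fin d → ℝ) :
    HasFDerivAt (expMoment π V g)
      (∫ y, (g y * Real.exp (V y + θ ⬝ᵥ y)) • dotProductCLM.flip y ∂π) θ :=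
  hasFDerivAt_integral_of_measure_compl_eq_zero hK hKπ
    (F := fun θ y => g y * Real.exp (V y + θ ⬝ᵥ y))
    (F' := fun θ y => (g y * Real.exp (V y + θ ⬝ᵥ y)) • dotProductCLM.flip y)
    (by fun_prop) (by fun_prop)
    (fun θ y => (((dotProductCLM.flip y).hasFDerivAt.const_add (V y)).exp.const_mul
      (g y)).congr_fderiv (by rw [smul_smul]; rfl)) θ

theorem differentiable_expMoment {g : (Fin d → ℝ) → ℝ} (hg : Continuous g) :
    Differentiable ℝ (expMoment π V g) :=
  fun θ => (hasFDerivAt_expMoment hK hKπ hV hg θ).differentiableAt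

theorem fderiv_expMoment_apply {g : (Fin d → ℝ) → ℝ} (hg : Continuous g) (θ v : Fin d → ℝ) :
    fderiv ℝ (expMoment π V g) θ v = expMoment π V (fun y => g y * (v ⬝ᵥ y)) θ := by
  have hint : Continuous fun y => (g y * Real.exp (V y + θ ⬝ᵥ y)) • dotProductCLM.flip y := by
    fun_prop
  rw [(hasFDerivAt_expMoment hK hKπ hV hg θ).fderiv, ContinuousLinearMap.integral_apply
    (hint.integrable_of_measure_compl_eq_zero hK hKπ)]
  simp only [_root_.smul_apply, ContinuousLinearMap.flip_apply, dotProductCLM_apply, smul_eq_mul,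
    expMoment]
  congr 1
  ext y
  ring

theorem expMoment_one_pos [NeZero π] (θ : Fin d → ℝ) : 0 < expMoment π V 1 θ := by
  simp only [expMoment, Pi.one_apply, one_mul]
  exact integral_exp_pos ((by fun_prop : Continuous fun y => Real.exp (V y + θ ⬝ᵥ y))
    |>.integrable_of_measure_compl_eq_zero hK hKπ)

theorem fderiv_log_expMoment_apply [NeZero π] (θ v : Fin d → ℝ) :
    fderiv ℝ (fun θ => Real.log (expMoment π V 1 θ)) θ v
      = expMoment π V (v ⬝ᵥ ·) θ / expMoment π V 1 θ := by
  rw [((differentiable_expMoment hK hKπ hV continuous_one θ).hasFDerivAt.log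
    (expMoment_one_pos hK hKπ hV θ).ne').fderiv, _root_.smul_apply,
    fderiv_expMoment_apply hK hKπ hV continuous_one, smul_eq_mul, inv_mul_eq_div]
  simp only [Pi.one_apply, one_mul]

theorem differentiable_fderiv_log_expMoment_apply [NeZero π] (v : Fin d → ℝ) :
    Differentiable ℝ fun θ => fderiv ℝ (fun θ => Real.log (expMoment π V 1 θ)) θ v := by
  simp_rw [fderiv_log_expMoment_apply hK hKπ hV, div_eq_mul_inv]
  exact (differentiable_expMoment hK hKπ hV (by fun_prop)).fun_mul
    ((differentiable_expMoment hK hKπ hV continuous_one).fun_inv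
      fun θ => (expMoment_one_pos hK hKπ hV θ).ne')

theorem fderiv_fderiv_log_expMoment_apply [NeZero π] (θ v : Fin d → ℝ) :
    fderiv ℝ (fun θ => fderiv ℝ (fun θ => Real.log (expMoment π V 1 θ)) θ v) θ v
      = expMoment π V (fun y => (v ⬝ᵥ y) ^ 2) θ / expMoment π V 1 θ
        - (expMoment π V (v ⬝ᵥ ·) θ / expMoment π V 1 θ) ^ 2 := by
  have hZ := (expMoment_one_pos hK hKπ hV θ).ne'
  simp_rw [fderiv_log_expMoment_apply hK hKπ hV]
  rw [fderiv_div_apply (differentiable_expMoment hK hKπ hV (by fun_prop) θ)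
    (differentiable_expMoment hK hKπ hV continuous_one θ) hZ,
    fderiv_expMoment_apply hK hKπ hV (by fun_prop),
    fderiv_expMoment_apply hK hKπ hV continuous_one]
  simp only [Pi.one_apply, one_mul, ← sq]
  field_simp

end ExpMoment

section Tilt

variable {π : Measure (Fin d → ℝ)} [IsFiniteMeasure π] {K : Set (Fin d → ℝ)} (hK : IsCompact K)
  (hKπ : π Kᶜ = 0)
include hK hKπ

theorem integral_tiltD (t : ℝ) (z : Fin d → ℝ) (g : (Fin d → ℝ) → ℝ) :
    ∫ y, g y ∂(tiltD π t z) = expMoment π (fun y => -(t / 2) * (y ⬝ᵥ y)) g (t • z)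
      / expMoment π (fun y => -(t / 2) * (y ⬝ᵥ y)) 1 (t • z) := by
  set ρ : (Fin d → ℝ) → ℝ := fun y => Real.exp (-(t / 2) * (y ⬝ᵥ y) + (t • z) ⬝ᵥ y)
  have hρ : Continuous ρ := by fun_prop
  have hdens : (fun y => ENNReal.ofReal (Real.exp (-(t / 2) * (y ⬝ᵥ y) + t * (z ⬝ᵥ y))))
      = fun y => ENNReal.ofReal (ρ y) := by
    simp only [ρ, smul_dotProduct, smul_eq_mul]
  have hmass : π.withDensity (fun y => ENNReal.ofReal (ρ y)) univ
      = ENNReal.ofReal (expMoment π (fun y => -(t / 2) * (y ⬝ᵥ y)) 1 (t • z)) := by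
    rw [withDensity_apply _ MeasurableSet.univ, setLIntegral_univ,
      ← ofReal_integral_eq_lintegral_ofReal (hρ.integrable_of_measure_compl_eq_zero hK hKπ)
        (.of_forall fun y => (Real.exp_pos _).le)]
    simp only [expMoment, Pi.one_apply, one_mul, ρ]
  have hZ : 0 ≤ expMoment π (fun y => -(t / 2) * (y ⬝ᵥ y)) 1 (t • z) :=
    integral_nonneg fun y => by simp [(Real.exp_pos _).le]
  rw [tiltD, hdens, integral_smul_measure, hmass, integral_withDensity_eq_integral_toReal_smul
    (by fun_prop) (.of_forall fun _ => ENNReal.ofReal_lt_top), ENNReal.toReal_inv,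
    ENNReal.toReal_ofReal hZ]
  simp only [ENNReal.toReal_ofReal (Real.exp_pos _).le, ρ, smul_eq_mul, expMoment]
  rw [inv_mul_eq_div]
  congr 2
  ext y
  ring

theorem covQ_tiltD (t : ℝ) (z v : Fin d → ℝ) :
    covQ (tiltD π t z) v
      = expMoment π (fun y => -(t / 2) * (y ⬝ᵥ y)) (fun y => (v ⬝ᵥ y) ^ 2) (t • z)
          / expMoment π (fun y => -(t / 2) * (y ⬝ᵥ y)) 1 (t • z)
        - (expMoment π (fun y => -(t / 2) * (y ⬝ᵥ y)) (v ⬝ᵥ ·) (t • z)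
          / expMoment π (fun y => -(t / 2) * (y ⬝ᵥ y)) 1 (t • z)) ^ 2 := by
  rw [covQ, integral_tiltD hK hKπ t z, integral_tiltD hK hKπ t z]

end Tilt

section BoostedPrior

/-- `e^{-T}` for the time `T = ½ log(1 + M⁻¹)` at which `pT` evolves `π`. -/
def ouDecay (M : ℝ) : ℝ := Real.exp (-((1 / 2) * Real.log (1 + M⁻¹)))

variable {M : ℝ}

theorem ouDecay_sq (hM : 0 < M) : ouDecay M ^ 2 = M / (M + 1) := by
  rw [ouDecay, ← Real.exp_nat_mul, Nat.cast_ofNat, show (2 : ℝ) * -((1 / 2) * Real.log (1 + M⁻¹))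
    = -Real.log (1 + M⁻¹) by ring, Real.exp_neg, Real.exp_log (by positivity)]
  field_simp

theorem exp_neg_two_mul_eq_ouDecay_sq :
    Real.exp (-2 * ((1 / 2) * Real.log (1 + M⁻¹))) = ouDecay M ^ 2 := by
  rw [ouDecay, ← Real.exp_nat_mul]
  ring_nf

theorem pT_eq_exp_mul_expMoment (π : Measure (Fin d → ℝ)) (hM : 0 < M) (u : Fin d → ℝ) :
    pT π M u = Real.exp (-((M + 1) / 2) * (u ⬝ᵥ u))
      * expMoment π (fun y => -(M / 2) * (y ⬝ᵥ y)) 1 ((ouDecay M * (M + 1)) • u) := by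
  have hs := ouDecay_sq hM
  rw [pT, expMoment, ← integral_const_mul]
  congr 1
  ext y
  rw [Pi.one_apply, one_mul, ← Real.exp_add, exp_neg_two_mul_eq_ouDecay_sq, ← ouDecay]
  congr 1
  simp only [sub_dotProduct, dotProduct_sub, smul_dotProduct, dotProduct_smul,
    dotProduct_comm y u, smul_eq_mul]
  have h1 : 1 - ouDecay M ^ 2 = (M + 1)⁻¹ := by rw [hs]; field_simp; ring
  have h2 : (M + 1) * ouDecay M ^ 2 = M := by rw [hs]; field_simp
  rw [h1]
  field_simp
  linear_combination (-(y ⬝ᵥ y)) * h2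

variable {π : Measure (Fin d → ℝ)} [IsFiniteMeasure π] [NeZero π] {K : Set (Fin d → ℝ)}
  (hK : IsCompact K) (hKπ : π Kᶜ = 0) (hM : 0 < M)
include hK hKπ hM

theorem fderiv_log_pT_apply (y v : Fin d → ℝ) :
    fderiv ℝ (fun u => Real.log (pT π M u)) y v
      = -(M + 1) * (y ⬝ᵥ v) + ouDecay M * (M + 1) * fderiv ℝ
        (fun θ => Real.log (expMoment π (fun y => -(M / 2) * (y ⬝ᵥ y)) 1 θ))
        ((ouDecay M * (M + 1)) • y) v := by
  set c := ouDecay M * (M + 1)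
  have hV : Continuous fun y : Fin d → ℝ => -(M / 2) * (y ⬝ᵥ y) := by fun_prop
  have hZ := differentiable_expMoment hK hKπ hV continuous_one
  have hpos := expMoment_one_pos hK hKπ hV
  have hlogpT : (fun u => Real.log (pT π M u)) = fun u => -((M + 1) / 2) * (u ⬝ᵥ u)
      + Real.log (expMoment π (fun y => -(M / 2) * (y ⬝ᵥ y)) 1 (c • u)) := by
    ext u
    rw [pT_eq_exp_mul_expMoment π hM, Real.log_mul (Real.exp_pos _).ne' (hpos _).ne', Real.log_exp]
  have hquad := (hasFDerivAt_dotProduct_self y).const_mul (-((M + 1) / 2))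
  have hlog : DifferentiableAt ℝ
      (fun u => Real.log (expMoment π (fun y => -(M / 2) * (y ⬝ᵥ y)) 1 (c • u))) y :=
    ((hZ.comp (differentiable_id.const_smul c)) y).log (hpos _).ne'
  rw [hlogpT, fderiv_fun_add hquad.differentiableAt hlog, hquad.fderiv,
    fderiv_comp_smul (f := fun θ => Real.log (expMoment π (fun y => -(M / 2) * (y ⬝ᵥ y)) 1 θ))]
  simp only [_root_.add_apply, _root_.smul_apply, dotProductCLM_apply, smul_eq_mul]
  ring

theorem fderiv_fderiv_log_pT_apply (x v : Fin d → ℝ) :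
    fderiv ℝ (fun y => fderiv ℝ (fun u => Real.log (pT π M u)) y v) x v
      = -(M + 1) * (v ⬝ᵥ v)
        + M * (M + 1) * covQ (tiltD π M ((ouDecay M * (M + 1) / M) • x)) v := by
  simp_rw [fderiv_log_pT_apply hK hKπ hM _ v]
  set c := ouDecay M * (M + 1)
  have hc : c ^ 2 = M * (M + 1) := by
    rw [mul_pow, ouDecay_sq hM]
    field_simp
  have hV : Continuous fun y : Fin d → ℝ => -(M / 2) * (y ⬝ᵥ y) := by fun_prop
  have hlin : HasFDerivAt (fun y : Fin d → ℝ => -(M + 1) * (y ⬝ᵥ v))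
      ((-(M + 1)) • dotProductCLM.flip v) x :=
    (dotProductCLM.flip v).hasFDerivAt.const_mul _
  have hD : DifferentiableAt ℝ (fun y => fderiv ℝ
      (fun θ => Real.log (expMoment π (fun y => -(M / 2) * (y ⬝ᵥ y)) 1 θ)) (c • y) v) x :=
    ((differentiable_fderiv_log_expMoment_apply hK hKπ hV v).comp
      (differentiable_id.const_smul c)) x
  rw [fderiv_fun_add hlin.differentiableAt (hD.const_mul c), hlin.fderiv, fderiv_const_mul hD,
    fderiv_comp_smul (f := fun θ => fderiv ℝ
      (fun θ => Real.log (expMoment π (fun y => -(M / 2) * (y ⬝ᵥ y)) 1 θ)) θ v),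
    covQ_tiltD hK hKπ, smul_smul M, mul_div_cancel₀ _ hM.ne',
    ← fderiv_fderiv_log_expMoment_apply hK hKπ hV]
  simp only [_root_.add_apply, _root_.smul_apply, ContinuousLinearMap.flip_apply,
    dotProductCLM_apply, smul_eq_mul]
  rw [← hc]
  ring

end BoostedPrior

end

theorem boosted_prior_hessian_bound_general
    (d : ℕ) (π : Measure (Fin d → ℝ)) [IsProbabilityMeasure π]
    (hsupp : ∃ K : Set (Fin d → ℝ), IsCompact K ∧ π Kᶜ = 0)
    (M : ℝ) (hM : 0 < M)
    (χ : ℝ)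
    (hχ : ∀ z v : Fin d → ℝ, covQ (tiltD π M z) v ≤ χ * (v ⬝ᵥ v)) :
    ∀ x v : Fin d → ℝ,
      fderiv ℝ (fun y => fderiv ℝ (fun u => Real.log (pT π M u)) y v) x v
        ≤ (1 + M) * (M * χ - 1) * (v ⬝ᵥ v) := by
  obtain ⟨K, hK, hKπ⟩ := hsupp
  intro x v
  calc _ = -(M + 1) * (v ⬝ᵥ v)
        + M * (M + 1) * covQ (tiltD π M ((ouDecay M * (M + 1) / M) • x)) v :=
        fderiv_fderiv_log_pT_apply hK hKπ hM x v
    _ ≤ -(M + 1) * (v ⬝ᵥ v) + M * (M + 1) * (χ * (v ⬝ᵥ v)) := by gcongr; exact hχ _ v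
    _ = (1 + M) * (M * χ - 1) * (v ⬝ᵥ v) := by ring

/-- **Hessian bound on the boosted prior via the susceptibility.**  Let `π` be a compactly
supported probability measure, `Q ⪰ 0` symmetric with largest eigenvalue `M > 0`, and let
`χ` be an upper bound of the susceptibility `χ_M(π) = sup_z ‖Cov(T_{M,Mz}π)‖` (expressed as
a quadratic-form bound).  Then `∇² log p_T(x) ≼ (1+M)(Mχ - 1)·I` for all `x`, where the
Hessian quadratic form in direction `v` is expressed via iterated directional derivatives. -/
theorem boosted_prior_hessian_bound
    (d : ℕ) (π : Measure (Fin d → ℝ)) [IsProbabilityMeasure π]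
    (hsupp : ∃ K : Set (Fin d → ℝ), IsCompact K ∧ π Kᶜ = 0)
    (Q : Matrix (Fin d) (Fin d) ℝ) (hQ : Q.PosSemidef)
    (M : ℝ) (hM : 0 < M)
    (hMub : (M • (1 : Matrix (Fin d) (Fin d) ℝ) - Q).PosSemidef)
    (hMmem : M ∈ spectrum ℝ Q)
    (χ : ℝ)
    (hχ : ∀ z v : Fin d → ℝ, covQ (tiltD π M z) v ≤ χ * (v ⬝ᵥ v)) :
    ∀ x v : Fin d → ℝ,
      fderiv ℝ (fun y => fderiv ℝ (fun u => Real.log (pT π M u)) y v) x v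
        ≤ (1 + M) * (M * χ - 1) * (v ⬝ᵥ v) :=
  boosted_prior_hessian_bound_general d π hsupp M hM χ hχ
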